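/- arXiv:1505.03882 — 5 statements merged into one kernel-verified Lean document; each statement's English description precedes it below -/
import Mathlib

section
/- For k ∈ ℕ there exists C < ∞ such that for every interval I ⊂ ℝ, every f ∈ C^k(I), and every ρ > 0, the Lebesgue measure of {x ∈ I : |f(x)| ≤ ρ} is at most C ρ^{1/k} (inf_{x∈I} |f^{(k)}(x)|)^{−1/k}. -/
/-!
By Darboux's theorem `f^(k)` has constant sign, so after replacing `f` by `-f` we may assume
`f^(k) ≥ c`. Then `g = f^(k-1)` grows at rate at least `c`, so `{|g| ≤ δ}` has length at most
`2δ/c`, and the rest of `I` consists of two intervals on which `|f^(k-1)| > δ`, where induction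
applies. The choice `δ = c (ρ/c)^(1/k)` balances both contributions and gives the constant
`2^(k+1) - 2`.
-/

open MeasureTheory Filter Topology

section Expansion

variable {g : ℝ → ℝ} {s : Set ℝ} {c : ℝ}

theorem Set.OrdConnected.mul_sub_le_sub_of_le_derivWithin (hs : s.OrdConnected) (hc : 0 < c)
    (hg : ∀ x ∈ s, c ≤ derivWithin g s x) :
    ∀ x ∈ s, ∀ y ∈ s, x ≤ y → c * (y - x) ≤ g y - g x := by
  have hdiff : DifferentiableOn ℝ g s := fun x hx =>
    differentiableWithinAt_of_derivWithin_ne_zero (hc.trans_le (hg x hx)).ne'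
  refine hs.convex.mul_sub_le_image_sub_of_le_deriv hdiff.continuousOn
    (hdiff.mono interior_subset) fun x hx => ?_
  rw [← derivWithin_of_mem_nhds (mem_interior_iff_mem_nhds.1 hx)]
  exact hg x (interior_subset hx)

theorem volume_sublevel_le_of_mul_sub_le_sub (hc : 0 < c)
    (hg : ∀ x ∈ s, ∀ y ∈ s, x ≤ y → c * (y - x) ≤ g y - g x) (δ : ℝ) :
    volume {x ∈ s | |g x| ≤ δ} ≤ ENNReal.ofReal (2 * δ / c) := by
  refine (Real.volume_le_diam _).trans (Metric.ediam_le fun x hx y hy => ?_)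
  wlog hxy : x ≤ y generalizing x y
  · rw [edist_comm]; exact this y hy x hx (le_of_not_ge hxy)
  rw [edist_dist, Real.dist_eq, abs_sub_comm, abs_of_nonneg (sub_nonneg.2 hxy)]
  refine ENNReal.ofReal_le_ofReal ((le_div_iff₀ hc).2 ?_)
  have := hg x hx.1 y hy.1 hxy
  linarith [abs_le.1 hx.2, abs_le.1 hy.2]

theorem monotoneOn_of_mul_sub_le_sub (hc : 0 < c)
    (hg : ∀ x ∈ s, ∀ y ∈ s, x ≤ y → c * (y - x) ≤ g y - g x) : MonotoneOn g s :=
  fun x hx y hy hxy => by nlinarith [hg x hx y hy hxy]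

theorem MonotoneOn.ordConnected_sep_lt (hs : s.OrdConnected) (hg : MonotoneOn g s) (δ : ℝ) :
    {x ∈ s | δ < g x}.OrdConnected :=
  ⟨fun _ hx _ hy _ hz =>
    ⟨hs.out hx.1 hy.1 hz, hx.2.trans_le (hg hx.1 (hs.out hx.1 hy.1 hz) hz.1)⟩⟩

theorem MonotoneOn.ordConnected_sep_gt (hs : s.OrdConnected) (hg : MonotoneOn g s) (δ : ℝ) :
    {x ∈ s | g x < δ}.OrdConnected :=
  ⟨fun _ hx _ hy _ hz =>
    ⟨hs.out hx.1 hy.1 hz, (hg (hs.out hx.1 hy.1 hz) hy.1 hz.2).trans_lt hy.2⟩⟩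

end Expansion

theorem iteratedDerivWithin_sep_of_eventually {f : ℝ → ℝ} {s : Set ℝ} {p : ℝ → Prop} {x : ℝ}
    (hp : ∀ᶠ y in 𝓝[s] x, p y) (n : ℕ) :
    iteratedDerivWithin n f {y ∈ s | p y} x = iteratedDerivWithin n f s x := by
  have hs : {y ∈ s | p y} =ᶠ[𝓝 x] s :=
    inter_eventuallyEq_left.2 (eventually_nhdsWithin_iff.1 hp)
  simp only [iteratedDerivWithin_eq_iteratedFDerivWithin, iteratedFDerivWithin_congr_set hs]

theorem div_rpow_one_div_add_one_rpow {u : ℝ} (hu : 0 < u) {k : ℝ} (hk : 0 < k) :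
    (u / u ^ (1 / (k + 1))) ^ (1 / k) = u ^ (1 / (k + 1)) := by
  rw [← Real.rpow_one_sub' hu.le, ← Real.rpow_mul hu.le]
  · congr 1; field_simp; ring
  · exact (sub_pos.2 ((div_lt_one (by linarith)).2 (by linarith))).ne'

theorem volume_sublevel_le_of_le_iteratedDerivWithin {k : ℕ} (hk : 1 ≤ k) {I : Set ℝ}
    (hI : I.OrdConnected) {f : ℝ → ℝ} {c ρ : ℝ} (hc : 0 < c) (hρ : 0 < ρ)
    (hf : ∀ x ∈ I, c ≤ iteratedDerivWithin k f I x) :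
    volume {x | x ∈ I ∧ |f x| ≤ ρ} ≤
      ENNReal.ofReal ((2 ^ (k + 1) - 2) * (ρ / c) ^ ((1 : ℝ) / k)) := by
  induction k, hk using Nat.le_induction generalizing I f c ρ with
  | base =>
    rw [iteratedDerivWithin_one] at hf
    convert volume_sublevel_le_of_mul_sub_le_sub hc
      (hI.mul_sub_le_sub_of_le_derivWithin hc hf) ρ using 2
    norm_num [mul_div_assoc]
  | succ k hk ih =>
    set g := iteratedDerivWithin k f I
    have hg' : ∀ x ∈ I, c ≤ derivWithin g I x := fun x hx => by
      simpa only [iteratedDerivWithin_succ] using hf x hx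
    have hexp := hI.mul_sub_le_sub_of_le_derivWithin hc hg'
    have hg : ContinuousOn g I := fun x hx =>
      (differentiableWithinAt_of_derivWithin_ne_zero (hc.trans_le (hg' x hx)).ne').continuousWithinAt
    have hmono := monotoneOn_of_mul_sub_le_sub hc hexp
    set t := (ρ / c) ^ ((1 : ℝ) / (k + 1)) with ht
    set δ := c * t
    have hδ : 0 < δ := mul_pos hc (by positivity)
    have hρδ : (ρ / δ) ^ ((1 : ℝ) / k) = t := by
      rw [div_mul_eq_div_div, ht,
        div_rpow_one_div_add_one_rpow (div_pos hρ hc) (by exact_mod_cast hk)]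
    have hmid : volume {x ∈ I | |g x| ≤ δ} ≤ ENNReal.ofReal (2 * t) := by
      convert volume_sublevel_le_of_mul_sub_le_sub hc hexp δ using 2
      rw [mul_div_assoc, mul_div_cancel_left₀ t hc.ne']
    have hpos : volume {x | x ∈ {x ∈ I | δ < g x} ∧ |f x| ≤ ρ} ≤
        ENNReal.ofReal ((2 ^ (k + 1) - 2) * t) := by
      rw [← hρδ]
      refine ih (hmono.ordConnected_sep_lt hI δ) hδ hρ fun x hx => ?_
      rw [iteratedDerivWithin_sep_of_eventually ((hg x hx.1).eventually_const_lt hx.2)]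
      exact hx.2.le
    have hneg : volume {x | x ∈ {x ∈ I | g x < -δ} ∧ |f x| ≤ ρ} ≤
        ENNReal.ofReal ((2 ^ (k + 1) - 2) * t) := by
      rw [← hρδ]
      have := ih (f := -f) (hmono.ordConnected_sep_gt hI (-δ)) hδ hρ fun x hx => by
        rw [iteratedDerivWithin_neg, iteratedDerivWithin_sep_of_eventually
          ((hg x hx.1).eventually_lt_const hx.2)]
        linarith [hx.2]
      simpa only [Pi.neg_apply, abs_neg] using this
    have hcover : {x | x ∈ I ∧ |f x| ≤ ρ} ⊆ {x ∈ I | |g x| ≤ δ} ∪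
        ({x | x ∈ {x ∈ I | δ < g x} ∧ |f x| ≤ ρ} ∪
          {x | x ∈ {x ∈ I | g x < -δ} ∧ |f x| ≤ ρ}) := by
      rintro x ⟨hxI, hxρ⟩
      rcases le_or_gt |g x| δ with h | h
      · exact Or.inl ⟨hxI, h⟩
      · rcases lt_abs.1 h with h | h
        · exact Or.inr (Or.inl ⟨⟨hxI, h⟩, hxρ⟩)
        · exact Or.inr (Or.inr ⟨⟨hxI, by linarith⟩, hxρ⟩)
    have hC : (0 : ℝ) ≤ 2 ^ (k + 1) - 2 :=
      sub_nonneg.2 (le_self_pow₀ one_le_two (Nat.succ_ne_zero k))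
    have ht0 : 0 ≤ t := by positivity
    calc volume {x | x ∈ I ∧ |f x| ≤ ρ}
        ≤ ENNReal.ofReal (2 * t) + (ENNReal.ofReal ((2 ^ (k + 1) - 2) * t) +
            ENNReal.ofReal ((2 ^ (k + 1) - 2) * t)) :=
          (measure_mono hcover).trans <| (measure_union_le _ _).trans <|
            add_le_add hmid <| (measure_union_le _ _).trans (add_le_add hpos hneg)
      _ = ENNReal.ofReal ((2 ^ (k + 1 + 1) - 2) * (ρ / c) ^ ((1 : ℝ) / ↑(k + 1))) := by
        rw [← ENNReal.ofReal_add (by positivity) (by positivity),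
          ← ENNReal.ofReal_add (by positivity) (by positivity)]
        push_cast
        rw [← ht]
        congr 1
        ring

theorem volume_sublevel_le_of_le_abs_iteratedDerivWithin {k : ℕ} (hk : 1 ≤ k) {I : Set ℝ}
    (hI : I.OrdConnected) {f : ℝ → ℝ} {c ρ : ℝ} (hc : 0 < c) (hρ : 0 < ρ)
    (hf : ∀ x ∈ I, c ≤ |iteratedDerivWithin k f I x|) :
    volume {x | x ∈ I ∧ |f x| ≤ ρ} ≤
      ENNReal.ofReal ((2 ^ (k + 1) - 2) * (ρ / c) ^ ((1 : ℝ) / k)) := by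
  obtain ⟨j, rfl⟩ := Nat.exists_eq_add_of_le' hk
  have hne : ∀ x ∈ I, derivWithin (iteratedDerivWithin j f I) I x ≠ 0 := fun x hx => by
    rw [← iteratedDerivWithin_succ]
    exact abs_pos.1 (hc.trans_le (hf x hx))
  have hsign := hasDerivWithinAt_forall_lt_or_forall_gt_of_forall_ne hI.convex
    (fun x hx => (differentiableWithinAt_of_derivWithin_ne_zero (hne x hx)).hasDerivWithinAt) hne
  simp only [← iteratedDerivWithin_succ] at hsign
  rcases hsign with hneg | hpos
  · have := volume_sublevel_le_of_le_iteratedDerivWithin hk hI (f := -f) hc hρ fun x hx => by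
      simpa only [iteratedDerivWithin_neg, abs_of_neg (hneg x hx)] using hf x hx
    simpa only [Pi.neg_apply, abs_neg] using this
  · exact volume_sublevel_le_of_le_iteratedDerivWithin hk hI hc hρ fun x hx => by
      simpa only [abs_of_pos (hpos x hx)] using hf x hx

/-- One-dimensional sublevel-set estimate (van der Corput / Christ): if `f ∈ C^k` on an
interval `I` and `|f^{(k)}| ≥ c` on `I`, then the measure of `{x ∈ I : |f(x)| ≤ ρ}` is at
most `C ρ^{1/k} c^{-1/k}`, with `C` depending only on `k`. -/
theorem sublevel_measure_bound_one_dim (k : ℕ) (hk : 0 < k) :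
    ∃ C : ℝ, 0 < C ∧ ∀ (I : Set ℝ), I.OrdConnected →
      ∀ f : ℝ → ℝ, ContDiffOn ℝ k f I →
        ∀ (c ρ : ℝ), 0 < c → 0 < ρ →
          (∀ x ∈ I, c ≤ |iteratedDerivWithin k f I x|) →
          volume {x | x ∈ I ∧ |f x| ≤ ρ} ≤
            ENNReal.ofReal (C * ρ ^ ((1 : ℝ) / k) * c ^ (-(1 : ℝ) / k)) := by
  refine ⟨2 ^ (k + 1) - 2, ?_, fun I hI f _ c ρ hc hρ hf => ?_⟩
  · have : (2 : ℝ) ^ 2 ≤ 2 ^ (k + 1) := pow_le_pow_right₀ one_le_two (by omega)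
    linarith
  rw [mul_assoc, neg_div, Real.rpow_neg hc.le, ← Real.inv_rpow hc.le,
    ← Real.mul_rpow hρ.le (inv_nonneg.2 hc.le), ← div_eq_mul_inv]
  exact volume_sublevel_le_of_le_abs_iteratedDerivWithin hk hI hc hρ hf
end

section
/- With A_{α,β} as above, if |β| = |α| then A_{α,β}(w) is a monomial: A_{α,β}(w) = C_{α,β} (−1)^{|α^{(n)}|} w_n^{|α^{(n)}|} (w^{(n)})^{β − α^{(n)}}, where C_{α,β} is the multinomial coefficient binom(α_n; β₁−α₁, …, β_{n−1}−α_{n−1}, 0) when β_j ≥ α_j for all 1 ≤ j ≤ n−1, and C_{α,β} = 0 otherwise. Moreover, for every α with |α| ≥ 1 there exists β with |β| = |α| and C_{α,β} ≠ 0. -/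
/-!
Every factor of the product has total degree at most one in `σ`, so the `σ`-coefficients of
degree `|α|` only see the degree-one parts of the factors, i.e. the top homogeneous component is
`(w⁽ⁿ⁾·σ)^{α_n} ∏ (-w_n σ_i)^{α_i}`: a monomial `σ^{α⁽ⁿ⁾}` times the power of a linear form,
whose coefficients are given by the multinomial theorem.
-/

open MvPolynomial

/-- The product `(w_n + w⁽ⁿ⁾·σ)^{α_n} (w⁽ⁿ⁾ - w_n σ)^{α⁽ⁿ⁾}`, viewed as a polynomial in
the variables `σ = (σ_1, …, σ_{n-1})` with coefficients that are polynomials in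
`w = (w_1, …, w_n)`; here `n = m + 2`. Its `σ^β`-coefficient is `A_{α,β}(w)`. -/
noncomputable def Aprod (m : ℕ) (α : Fin (m + 2) →₀ ℕ) :
    MvPolynomial (Fin (m + 1)) (MvPolynomial (Fin (m + 2)) ℝ) :=
  (C (X (Fin.last (m + 1))) + ∑ i : Fin (m + 1), C (X i.castSucc) * X i) ^
      (α (Fin.last (m + 1))) *
    ∏ i : Fin (m + 1), (C (X i.castSucc) - C (X (Fin.last (m + 1))) * X i) ^ (α i.castSucc)

namespace MvPolynomial

variable {σ R : Type*} [CommSemiring R]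

theorem homogeneousComponent_mul_of_totalDegree_le {f g : MvPolynomial σ R} {d e : ℕ}
    (hf : f.totalDegree ≤ d) (hg : g.totalDegree ≤ e) :
    homogeneousComponent (d + e) (f * g) =
      homogeneousComponent d f * homogeneousComponent e g := by
  classical
  ext β
  rw [coeff_homogeneousComponent]
  split_ifs with hβ
  · rw [coeff_mul, coeff_mul]
    refine Finset.sum_congr rfl fun x hx => ?_
    have hx : x.1.degree + x.2.degree = d + e := by
      rw [← map_add, Finset.HasAntidiagonal.mem_antidiagonal.mp hx, hβ]
    rw [coeff_homogeneousComponent, coeff_homogeneousComponent]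
    rcases lt_trichotomy x.1.degree d with h | h | h
    · rw [coeff_eq_zero_of_totalDegree_lt (hg.trans_lt (by rw [← Finsupp.degree_apply]; omega)),
        if_neg h.ne, zero_mul, mul_zero]
    · rw [if_pos h, if_pos (by omega)]
    · rw [coeff_eq_zero_of_totalDegree_lt (hf.trans_lt (by rwa [← Finsupp.degree_apply])),
        if_neg h.ne', zero_mul, zero_mul]
  · exact (((homogeneousComponent_isHomogeneous d f).mul
      (homogeneousComponent_isHomogeneous e g)).coeff_eq_zero hβ).symm

theorem homogeneousComponent_prod_of_totalDegree_le {ι : Type*} (s : Finset ι)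
    {f : ι → MvPolynomial σ R} {d : ι → ℕ} (hf : ∀ i ∈ s, (f i).totalDegree ≤ d i) :
    homogeneousComponent (∑ i ∈ s, d i) (∏ i ∈ s, f i) =
      ∏ i ∈ s, homogeneousComponent (d i) (f i) := by
  induction s using Finset.cons_induction with
  | empty => simp [homogeneousComponent_zero]
  | cons a s ha ih =>
    rw [Finset.forall_mem_cons] at hf
    rw [Finset.sum_cons, Finset.prod_cons, Finset.prod_cons,
      homogeneousComponent_mul_of_totalDegree_le hf.1
        ((totalDegree_finsetProd _ _).trans (Finset.sum_le_sum hf.2)), ih hf.2]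

theorem homogeneousComponent_pow_of_totalDegree_le {f : MvPolynomial σ R} {d : ℕ}
    (hf : f.totalDegree ≤ d) (n : ℕ) :
    homogeneousComponent (n * d) (f ^ n) = homogeneousComponent d f ^ n := by
  simpa using homogeneousComponent_prod_of_totalDegree_le (Finset.range n)
    (f := fun _ => f) (fun _ _ => hf)

theorem totalDegree_C_add_le {ℓ : MvPolynomial σ R} {n : ℕ} (hℓ : ℓ.IsHomogeneous n) (c : R) :
    (C c + ℓ).totalDegree ≤ n :=
  (totalDegree_add _ _).trans (max_le (by simp) hℓ.totalDegree_le)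

theorem homogeneousComponent_C_add {ℓ : MvPolynomial σ R} {n : ℕ} (hℓ : ℓ.IsHomogeneous n)
    (hn : n ≠ 0) (c : R) : homogeneousComponent n (C c + ℓ) = ℓ := by
  rw [map_add, homogeneousComponent_eq_zero _ _ (by simpa using hn.bot_lt),
    homogeneousComponent_of_mem hℓ, if_pos rfl, zero_add]

theorem totalDegree_C_add_pow_le {ℓ : MvPolynomial σ R} (hℓ : ℓ.IsHomogeneous 1) (c : R)
    (n : ℕ) : ((C c + ℓ) ^ n).totalDegree ≤ n :=
  (totalDegree_pow _ _).trans (by simpa using Nat.mul_le_mul_left n (totalDegree_C_add_le hℓ c))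

theorem homogeneousComponent_C_add_pow {ℓ : MvPolynomial σ R} (hℓ : ℓ.IsHomogeneous 1) (c : R)
    (n : ℕ) : homogeneousComponent n ((C c + ℓ) ^ n) = ℓ ^ n := by
  simpa [homogeneousComponent_C_add hℓ one_ne_zero] using
    homogeneousComponent_pow_of_totalDegree_le (totalDegree_C_add_le hℓ c) n

theorem prod_C_mul_X_pow [Fintype σ] (c : R) (k : σ →₀ ℕ) :
    ∏ i, (C c * X i) ^ k i = monomial k (c ^ k.degree) := by
  rw [monomial_eq, Finsupp.prod_fintype _ _ (fun _ => pow_zero _), Finsupp.degree_eq_sum,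
    ← Finset.prod_pow_eq_pow_sum, map_prod, ← Finset.prod_mul_distrib]
  simp_rw [map_pow, mul_pow]

theorem coeff_sum_C_mul_X_pow_mul_monomial [Fintype σ] (a : σ → R) (n : ℕ) (k β : σ →₀ ℕ)
    (r : R) (hβ : β.degree = n + k.degree) :
    coeff β ((∑ i, C (a i) * X i) ^ n * monomial k r) =
      if k ≤ β then (β - k).multinomial * (β - k).prod (fun i e => a i ^ e) * r else 0 := by
  rw [coeff_mul_monomial']
  split_ifs with hk
  · have hdeg : (β - k).sum (fun _ e => e) = n := by
      have := congrArg Finsupp.degree (tsub_add_cancel_of_le hk)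
      rw [map_add] at this
      change (β - k).degree = n
      omega
    simp_rw [← smul_eq_C_mul]
    rw [coeff_linearCombination_X_pow_of_fintype, if_pos hdeg]
  · rfl

end MvPolynomial

namespace Finsupp

variable {M : Type*} [Zero M] {n : ℕ}

noncomputable def init (s : Fin (n + 1) →₀ M) : Fin n →₀ M :=
  s.comapDomain Fin.castSucc (Fin.castSucc_injective n).injOn

@[simp]
theorem init_apply (s : Fin (n + 1) →₀ M) (i : Fin n) : s.init i = s i.castSucc := rfl

theorem degree_eq_degree_init_add (s : Fin (n + 1) →₀ ℕ) :
    s.degree = s.init.degree + s (Fin.last n) := by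
  simp [degree_eq_sum, Fin.sum_univ_castSucc]

end Finsupp

theorem homogeneousComponent_Aprod (m : ℕ) (α : Fin (m + 2) →₀ ℕ) :
    homogeneousComponent α.degree (Aprod m α) =
      (∑ i : Fin (m + 1), C (X i.castSucc) * X i) ^ α (Fin.last (m + 1)) *
        monomial α.init ((-X (Fin.last (m + 1))) ^ α.init.degree) := by
  have hS : (∑ i : Fin (m + 1), C (X i.castSucc) * X i :
      MvPolynomial (Fin (m + 1)) (MvPolynomial (Fin (m + 2)) ℝ)).IsHomogeneous 1 :=
    IsHomogeneous.sum _ _ _ fun i _ => isHomogeneous_C_mul_X _ i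
  have hL (i : Fin (m + 1)) : (C (-X (Fin.last (m + 1))) * X i :
      MvPolynomial (Fin (m + 1)) (MvPolynomial (Fin (m + 2)) ℝ)).IsHomogeneous 1 :=
    isHomogeneous_C_mul_X _ i
  have hfactor (i : Fin (m + 1)) : (C (X i.castSucc) - C (X (Fin.last (m + 1))) * X i :
      MvPolynomial (Fin (m + 1)) (MvPolynomial (Fin (m + 2)) ℝ)) =
      C (X i.castSucc) + C (-X (Fin.last (m + 1))) * X i := by
    rw [map_neg]; ring
  rw [Finsupp.degree_eq_degree_init_add, add_comm α.init.degree, Aprod, ← prod_C_mul_X_pow,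
    Finsupp.degree_eq_sum α.init]
  simp only [Finsupp.init_apply, hfactor]
  rw [homogeneousComponent_mul_of_totalDegree_le (totalDegree_C_add_pow_le hS _ _)
      ((totalDegree_finsetProd _ _).trans
        (Finset.sum_le_sum fun i _ => totalDegree_C_add_pow_le (hL i) _ _)),
    homogeneousComponent_C_add_pow hS,
    homogeneousComponent_prod_of_totalDegree_le _
      (fun i _ => totalDegree_C_add_pow_le (hL i) _ _)]
  simp only [homogeneousComponent_C_add_pow (hL _)]

/-- When `|β| = |α|`, the coefficient polynomial `A_{α,β}(w)` is the monomial
`C_{α,β} (-1)^{|α⁽ⁿ⁾|} w_n^{|α⁽ⁿ⁾|} (w⁽ⁿ⁾)^{β - α⁽ⁿ⁾}`, where `C_{α,β}` is the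
multinomial coefficient `(α_n; β₁-α₁, …, β_{n-1}-α_{n-1}, 0)` if `β_j ≥ α_j` for all
`j ≤ n-1` and `0` otherwise.  Moreover, if `|α| ≥ 1` then some `β` with `|β| = |α|` has
`C_{α,β} ≠ 0`. -/
theorem A_coeff_top_degree (m : ℕ) (α : Fin (m + 2) →₀ ℕ) :
    (∀ β : Fin (m + 1) →₀ ℕ, (β.sum fun _ k => k) = (α.sum fun _ k => k) →
      MvPolynomial.coeff β (Aprod m α) =
        (if ∀ i : Fin (m + 1), α i.castSucc ≤ β i
          then (Nat.multinomial Finset.univ (fun i : Fin (m + 1) => β i - α i.castSucc) :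
            MvPolynomial (Fin (m + 2)) ℝ)
          else 0) *
        (-1 : MvPolynomial (Fin (m + 2)) ℝ) ^ (∑ i : Fin (m + 1), α i.castSucc) *
        MvPolynomial.monomial
          (Finsupp.single (Fin.last (m + 1)) (∑ i : Fin (m + 1), α i.castSucc) +
            ∑ i : Fin (m + 1), Finsupp.single i.castSucc (β i - α i.castSucc)) (1 : ℝ)) ∧
    (1 ≤ (α.sum fun _ k => k) →
      ∃ β : Fin (m + 1) →₀ ℕ, (β.sum fun _ k => k) = (α.sum fun _ k => k) ∧
        ∀ i : Fin (m + 1), α i.castSucc ≤ β i) := by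
  refine ⟨fun β hβ => ?_, fun _ => ⟨α.init + Finsupp.single 0 (α (Fin.last (m + 1))), ?_,
    fun i => le_self_add⟩⟩
  · change β.degree = α.degree at hβ
    have hcoeff := coeff_homogeneousComponent (n := α.degree) (φ := Aprod m α) β
    rw [if_pos hβ] at hcoeff
    rw [← hcoeff, homogeneousComponent_Aprod, coeff_sum_C_mul_X_pow_mul_monomial _ _ _ _ _
      (by rw [hβ, Finsupp.degree_eq_degree_init_add, add_comm])]
    by_cases h : α.init ≤ β
    · rw [if_pos h, if_pos (show ∀ i, α i.castSucc ≤ β i from Finsupp.le_def.mp h),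
        Finsupp.multinomial_eq_of_support_subset (Finset.subset_univ _),
        Finsupp.prod_fintype _ _ (fun _ => pow_zero _), Finsupp.degree_eq_sum, ← one_mul (1 : ℝ),
        ← monomial_mul, monomial_sum_one]
      simp only [Finsupp.coe_tsub, Finsupp.init_apply, ← X_pow_eq_monomial]
      rw [show ⇑β - ⇑α.init = fun i => β i - α i.castSucc from rfl, neg_pow]
      ring
    · rw [if_neg h, if_neg (show ¬∀ i, α i.castSucc ≤ β i from (h <| Finsupp.le_def.mpr ·)),
        zero_mul, zero_mul]
  · change (α.init + _).degree = α.degree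
    rw [map_add, Finsupp.degree_single, Finsupp.degree_eq_degree_init_add α]
end

section
/- Let n ≥ 2 and m = 2k. Suppose the coefficients (c_γ)_{|γ|=m} of a homogeneous polynomial on ℝ^n satisfy, for every multi-index ρ with |ρ| = m and every 1 ≤ j ≤ n−1, the relation c_{ρ+e_n−e_j}(ρ_n+1) − c_{ρ−e_n+e_j}(ρ_j+1) = 0 (with the convention that c with a negative index entry is zero). Then c_γ = 0 for every γ with |γ| = m having at least one odd entry. -/
/-!
Write `n` for the last coordinate. The relation for `ρ = α - e_n + e_j` links `c_α` to
`c_{α - 2e_n + 2e_j}` with the nonzero weight `α_n` on `c_α`, and when `α_n = 1` it says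
`c_α = 0` outright. So an odd `n`-th entry can be lowered two at a time down to `1`, which forces
`c_α = 0`; symmetrically for an odd `j`-th entry.
-/

open Finsupp

theorem Finsupp.degree_tsub_single_add_single {ι : Type*} {α : ι →₀ ℕ} {p : ι} {a : ℕ}
    (h : a ≤ α p) (q : ι) : (α - single p a + single q a).degree = α.degree := by
  conv_rhs => rw [← tsub_add_cancel_of_le (single_le_iff.2 h)]
  simp only [map_add, degree_single]

theorem coeff_eq_zero_of_odd_of_transfer {ι K : Type*} [Field K] [CharZero K]
    {c : (ι →₀ ℕ) → K} {m : ℕ} {p q : ι} (hpq : p ≠ q)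
    (htransfer : ∀ α : ι →₀ ℕ, α.degree = m → 0 < α p →
      (α p : K) * c α =
        if 2 ≤ α p then ((α q : K) + 2) * c (α - single p 2 + single q 2) else 0)
    (α : ι →₀ ℕ) (hα : α.degree = m) (hodd : Odd (α p)) : c α = 0 := by
  induction hn : α p using Nat.strong_induction_on generalizing α with
  | _ n ih =>
  have hpos : 0 < α p := hodd.pos
  suffices (α p : K) * c α = 0 by simpa [hpos.ne'] using this
  rw [htransfer α hα hpos]
  split_ifs with h2
  · have hp : (α - single p 2 + single q 2 : ι →₀ ℕ) p = n - 2 := by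
      simp [single_eq_of_ne hpq, hn]
    rw [ih (n - 2) (by omega) _ (by rwa [degree_tsub_single_add_single h2])
      (hp ▸ hn ▸ Nat.Odd.sub_even h2 hodd even_two) hp, mul_zero]
  · rfl

/-- The relations `B_{2k,e_j} = 0`, `j < n`, on the coefficients of a form of degree `2k` in
`n = d + 2` variables; `Fin.last (d + 1)` is the coordinate `n`. -/
def CoeffRelations (d k : ℕ) (c : (Fin (d + 2) →₀ ℕ) → ℝ) : Prop :=
  ∀ ρ : Fin (d + 2) →₀ ℕ, (ρ.sum fun _ x => x) = 2 * k →
      ∀ j : Fin (d + 1),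
        (if 0 < ρ j.castSucc then
            c (ρ + Finsupp.single (Fin.last (d + 1)) 1 - Finsupp.single j.castSucc 1) *
              ((ρ (Fin.last (d + 1)) : ℝ) + 1)
          else 0) -
        (if 0 < ρ (Fin.last (d + 1)) then
            c (ρ - Finsupp.single (Fin.last (d + 1)) 1 + Finsupp.single j.castSucc 1) *
              ((ρ j.castSucc : ℝ) + 1)
          else 0) = 0

namespace CoeffRelations

variable {d k : ℕ} {c : (Fin (d + 2) →₀ ℕ) → ℝ}

theorem transfer_last (h : CoeffRelations d k c) (j : Fin (d + 1)) (α : Fin (d + 2) →₀ ℕ)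
    (hα : α.degree = 2 * k) (hpos : 0 < α (Fin.last (d + 1))) :
    (α (Fin.last (d + 1)) : ℝ) * c α =
      if 2 ≤ α (Fin.last (d + 1)) then
        ((α j.castSucc : ℝ) + 2) * c (α - single (Fin.last (d + 1)) 2 + single j.castSucc 2)
      else 0 := by
  have hne : j.castSucc ≠ Fin.last (d + 1) := (Fin.castSucc_lt_last j).ne
  set ρ := α - single (Fin.last (d + 1)) 1 + single j.castSucc 1 with hρ
  have hρj : ρ j.castSucc = α j.castSucc + 1 := by simp [ρ, single_eq_of_ne hne]
  have hρn : ρ (Fin.last (d + 1)) = α (Fin.last (d + 1)) - 1 := by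
    simp [ρ, single_eq_of_ne hne.symm]
  have hup : ρ + single (Fin.last (d + 1)) 1 - single j.castSucc 1 = α := by
    ext i
    simp only [ρ, coe_add, coe_tsub, Pi.add_apply, Pi.sub_apply, single_apply]
    grind
  have hdown : ρ - single (Fin.last (d + 1)) 1 + single j.castSucc 1 =
      α - single (Fin.last (d + 1)) 2 + single j.castSucc 2 := by
    ext i
    simp only [ρ, coe_add, coe_tsub, Pi.add_apply, Pi.sub_apply, single_apply]
    grind
  have hρdeg : ρ.degree = 2 * k := by rw [hρ, degree_tsub_single_add_single hpos, hα]
  have hrel := h ρ hρdeg j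
  rw [hup, hdown, hρj, hρn, if_pos (Nat.succ_pos _)] at hrel
  simp only [show 0 < α (Fin.last (d + 1)) - 1 ↔ 2 ≤ α (Fin.last (d + 1)) by omega,
    Nat.cast_pred hpos, sub_add_cancel] at hrel
  split_ifs at hrel ⊢ <;> push_cast at hrel <;> linarith

theorem transfer_castSucc (h : CoeffRelations d k c) (j : Fin (d + 1)) (α : Fin (d + 2) →₀ ℕ)
    (hα : α.degree = 2 * k) (hpos : 0 < α j.castSucc) :
    (α j.castSucc : ℝ) * c α =
      if 2 ≤ α j.castSucc then
        ((α (Fin.last (d + 1)) : ℝ) + 2) *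
          c (α - single j.castSucc 2 + single (Fin.last (d + 1)) 2)
      else 0 := by
  have hne : j.castSucc ≠ Fin.last (d + 1) := (Fin.castSucc_lt_last j).ne
  set ρ := α - single j.castSucc 1 + single (Fin.last (d + 1)) 1 with hρ
  have hρj : ρ j.castSucc = α j.castSucc - 1 := by simp [ρ, single_eq_of_ne hne]
  have hρn : ρ (Fin.last (d + 1)) = α (Fin.last (d + 1)) + 1 := by
    simp [ρ, single_eq_of_ne hne.symm]
  have hup : ρ + single (Fin.last (d + 1)) 1 - single j.castSucc 1 =
      α - single j.castSucc 2 + single (Fin.last (d + 1)) 2 := by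
    ext i
    simp only [ρ, coe_add, coe_tsub, Pi.add_apply, Pi.sub_apply, single_apply]
    grind
  have hdown : ρ - single (Fin.last (d + 1)) 1 + single j.castSucc 1 = α := by
    ext i
    simp only [ρ, coe_add, coe_tsub, Pi.add_apply, Pi.sub_apply, single_apply]
    grind
  have hρdeg : ρ.degree = 2 * k := by rw [hρ, degree_tsub_single_add_single hpos, hα]
  have hrel := h ρ hρdeg j
  rw [hup, hdown, hρj, hρn, if_pos (Nat.succ_pos _)] at hrel
  simp only [show 0 < α j.castSucc - 1 ↔ 2 ≤ α j.castSucc by omega,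
    Nat.cast_pred hpos, sub_add_cancel] at hrel
  split_ifs at hrel ⊢ <;> push_cast at hrel <;> linarith

end CoeffRelations

/-- If the coefficients `(c_γ)` of a homogeneous polynomial of degree `m = 2k` in `n = d+2`
variables satisfy the relations `c_{ρ+e_n-e_j}(ρ_n+1) - c_{ρ-e_n+e_j}(ρ_j+1) = 0` for all
`|ρ| = 2k` and `1 ≤ j ≤ n-1` (terms with a negative index entry being absent), then `c_γ`
vanishes for every `γ` of degree `2k` having at least one odd entry. -/
theorem coeff_vanish_on_odd_indices (d k : ℕ) (c : (Fin (d + 2) →₀ ℕ) → ℝ)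
    (hrel : ∀ ρ : Fin (d + 2) →₀ ℕ, (ρ.sum fun _ x => x) = 2 * k →
      ∀ j : Fin (d + 1),
        (if 0 < ρ j.castSucc then
            c (ρ + Finsupp.single (Fin.last (d + 1)) 1 - Finsupp.single j.castSucc 1) *
              ((ρ (Fin.last (d + 1)) : ℝ) + 1)
          else 0) -
        (if 0 < ρ (Fin.last (d + 1)) then
            c (ρ - Finsupp.single (Fin.last (d + 1)) 1 + Finsupp.single j.castSucc 1) *
              ((ρ j.castSucc : ℝ) + 1)
          else 0) = 0) :
    ∀ γ : Fin (d + 2) →₀ ℕ, (γ.sum fun _ x => x) = 2 * k →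
      (∃ i, Odd (γ i)) → c γ = 0 := by
  rintro γ hγ ⟨i, hodd⟩
  induction i using Fin.lastCases with
  | last =>
    exact coeff_eq_zero_of_odd_of_transfer (Fin.castSucc_lt_last 0).ne'
      (CoeffRelations.transfer_last hrel 0) γ hγ hodd
  | cast j =>
    exact coeff_eq_zero_of_odd_of_transfer (Fin.castSucc_lt_last j).ne
      (CoeffRelations.transfer_castSucc hrel j) γ hγ hodd
end

section
/- Let n ≥ 2, m = 2k, and suppose (c_γ)_{|γ|=m} satisfy c_{ρ+e_n−e_j}(ρ_n+1) − c_{ρ−e_n+e_j}(ρ_j+1) = 0 for all |ρ| = m and 1 ≤ j ≤ n−1 (with c vanishing on indices with a negative entry). Set C = c_{(0,…,0,2k)}. Then for every γ = (2γ₁,…,2γ_n) with γ₁+⋯+γ_n = k, one has c_γ = C · k!/(γ₁!⋯γ_n!). -/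
open Finset

private lemma sum_finsupp_eq (d : ℕ) (δ : Fin (d + 2) →₀ ℕ) :
    (δ.sum fun _ x => x) = ∑ i : Fin (d + 2), δ i :=
  Finsupp.sum_fintype _ _ (fun _ => rfl)

private lemma split_two (d : ℕ) (j : Fin (d + 1)) {M : Type*} [CommMonoid M]
    (f : Fin (d + 2) → M) :
    ∏ i, f i = f j.castSucc * (f (Fin.last (d + 1)) *
      ∏ i ∈ (Finset.univ.erase j.castSucc).erase (Fin.last (d + 1)), f i) := by
  have hne : j.castSucc ≠ Fin.last (d + 1) := Fin.ne_of_lt (Fin.castSucc_lt_last j)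
  have hmem : Fin.last (d + 1) ∈ Finset.univ.erase j.castSucc := by simp [hne.symm]
  rw [Finset.mul_prod_erase _ f hmem, Finset.mul_prod_erase _ f (Finset.mem_univ j.castSucc)]

private lemma split_two_add (d : ℕ) (j : Fin (d + 1)) (f : Fin (d + 2) → ℕ) :
    ∑ i, f i = f j.castSucc + (f (Fin.last (d + 1)) +
      ∑ i ∈ (Finset.univ.erase j.castSucc).erase (Fin.last (d + 1)), f i) := by
  have hne : j.castSucc ≠ Fin.last (d + 1) := Fin.ne_of_lt (Fin.castSucc_lt_last j)
  have hmem : Fin.last (d + 1) ∈ Finset.univ.erase j.castSucc := by simp [hne.symm]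
  rw [Finset.add_sum_erase _ f hmem, Finset.add_sum_erase _ f (Finset.mem_univ j.castSucc)]

/-- factorial product identity: moving one unit from coordinate `j` to `last`. -/
private lemma prod_fact_move (d : ℕ) (δ δ' : Fin (d + 2) →₀ ℕ) (j : Fin (d + 1))
    (hj : 0 < δ j.castSucc)
    (h1 : δ' j.castSucc = δ j.castSucc - 1)
    (h2 : δ' (Fin.last (d + 1)) = δ (Fin.last (d + 1)) + 1)
    (h3 : ∀ i, i ≠ j.castSucc → i ≠ Fin.last (d + 1) → δ' i = δ i) :
    (∏ i, Nat.factorial (δ' i)) * δ j.castSucc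
      = (∏ i, Nat.factorial (δ i)) * (δ (Fin.last (d + 1)) + 1) := by
  have hrest : ∏ i ∈ (Finset.univ.erase j.castSucc).erase (Fin.last (d + 1)),
      Nat.factorial (δ' i) = ∏ i ∈ (Finset.univ.erase j.castSucc).erase (Fin.last (d + 1)),
      Nat.factorial (δ i) := by
    refine Finset.prod_congr rfl fun i hi => ?_
    simp only [Finset.mem_erase] at hi
    rw [h3 i hi.2.1 hi.1]
  rw [split_two d j (fun i => Nat.factorial (δ' i)),
    split_two d j (fun i => Nat.factorial (δ i)), hrest, h1, h2]
  obtain ⟨m, hm⟩ := Nat.exists_eq_add_of_lt hj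
  rw [show δ j.castSucc = m + 1 by omega]
  simp only [Nat.add_sub_cancel, Nat.factorial_succ]
  ring

/-- Under the relations `c_{ρ+e_n-e_j}(ρ_n+1) - c_{ρ-e_n+e_j}(ρ_j+1) = 0` for all `|ρ| = 2k`
and `1 ≤ j ≤ n-1` (with `n = d+2`, and terms with a negative index entry being absent), the
coefficients at all-even multi-indices are determined by `C = c_{(0,…,0,2k)}`:
`c_{2δ} = C · k!/(δ₁!⋯δ_n!)` for every `δ` with `|δ| = k`. -/
theorem coeff_even_indices_multinomial (d k : ℕ) (c : (Fin (d + 2) →₀ ℕ) → ℝ)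
    (hrel : ∀ ρ : Fin (d + 2) →₀ ℕ, (ρ.sum fun _ x => x) = 2 * k →
      ∀ j : Fin (d + 1),
        (if 0 < ρ j.castSucc then
            c (ρ + Finsupp.single (Fin.last (d + 1)) 1 - Finsupp.single j.castSucc 1) *
              ((ρ (Fin.last (d + 1)) : ℝ) + 1)
          else 0) -
        (if 0 < ρ (Fin.last (d + 1)) then
            c (ρ - Finsupp.single (Fin.last (d + 1)) 1 + Finsupp.single j.castSucc 1) *
              ((ρ j.castSucc : ℝ) + 1)
          else 0) = 0) :
    ∀ δ : Fin (d + 2) →₀ ℕ, (δ.sum fun _ x => x) = k →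
      c (2 • δ) = c (Finsupp.single (Fin.last (d + 1)) (2 * k)) *
        (Nat.multinomial Finset.univ fun i : Fin (d + 2) => δ i) := by
  suffices H : ∀ M : ℕ, ∀ δ : Fin (d + 2) →₀ ℕ, (δ.sum fun _ x => x) = k →
      (∑ i : Fin (d + 1), δ i.castSucc) = M →
      c (2 • δ) = c (Finsupp.single (Fin.last (d + 1)) (2 * k)) *
        (Nat.multinomial Finset.univ fun i : Fin (d + 2) => δ i) by
    intro δ hδ; exact H _ δ hδ rfl
  intro M
  induction M with
  | zero =>
    intro δ hδ hM
    have hz : ∀ i : Fin (d + 1), δ i.castSucc = 0 := fun i =>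
      Finset.sum_eq_zero_iff.mp hM i (Finset.mem_univ i)
    have hsum : δ (Fin.last (d + 1)) = k := by
      rw [sum_finsupp_eq, Fin.sum_univ_castSucc] at hδ
      simpa only [hz, Finset.sum_const_zero, zero_add] using hδ
    have hδeq : δ = Finsupp.single (Fin.last (d + 1)) k := by
      ext i
      rcases Fin.eq_castSucc_or_eq_last i with ⟨j, rfl⟩ | rfl
      · rw [hz j, Finsupp.single_apply,
          if_neg (Fin.ne_of_lt (Fin.castSucc_lt_last j)).symm]
      · rw [hsum, Finsupp.single_apply, if_pos rfl]
    subst hδeq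
    rw [Finsupp.smul_single, smul_eq_mul]
    have hmul : (Nat.multinomial Finset.univ fun i : Fin (d + 2) =>
        Finsupp.single (Fin.last (d + 1)) k i) = 1 := by
      have hspec := Nat.multinomial_spec Finset.univ
        (fun i : Fin (d + 2) => Finsupp.single (Fin.last (d + 1)) k i)
      have hprod : (∏ i : Fin (d + 2),
          Nat.factorial (Finsupp.single (Fin.last (d + 1)) k i)) = Nat.factorial k := by
        rw [Finset.prod_eq_single (Fin.last (d + 1))]
        · simp
        · intro b _ hb; rw [Finsupp.single_apply, if_neg (Ne.symm hb)]; rfl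
        · simp
      have hsum2 : (∑ i : Fin (d + 2), Finsupp.single (Fin.last (d + 1)) k i) = k := by
        rw [Finset.sum_eq_single (Fin.last (d + 1))]
        · simp
        · intro b _ hb; rw [Finsupp.single_apply, if_neg (Ne.symm hb)]
        · simp
      rw [hprod, hsum2] at hspec
      nlinarith [Nat.multinomial_pos Finset.univ
        (fun i : Fin (d + 2) => Finsupp.single (Fin.last (d + 1)) k i),
        Nat.factorial_pos k, hspec]
    rw [hmul]; simp
  | succ M IH =>
    intro δ hδ hM
    have hex : ∃ j : Fin (d + 1), 0 < δ j.castSucc := by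
      by_contra h
      push_neg at h
      simp only [Nat.le_zero] at h
      rw [Finset.sum_eq_zero (fun i _ => h i)] at hM
      omega
    obtain ⟨j, hj⟩ := hex
    have hne : j.castSucc ≠ Fin.last (d + 1) := Fin.ne_of_lt (Fin.castSucc_lt_last j)
    set δ' : Fin (d + 2) →₀ ℕ :=
      δ - Finsupp.single j.castSucc 1 + Finsupp.single (Fin.last (d + 1)) 1 with hδ'def
    have hδ'j : δ' j.castSucc = δ j.castSucc - 1 := by
      rw [hδ'def, Finsupp.add_apply, Finsupp.tsub_apply]
      simp [Finsupp.single_apply, hne, Ne.symm hne]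
    have hδ'l : δ' (Fin.last (d + 1)) = δ (Fin.last (d + 1)) + 1 := by
      rw [hδ'def, Finsupp.add_apply, Finsupp.tsub_apply]
      simp [Finsupp.single_apply, hne, Ne.symm hne]
    have hδ'o : ∀ i, i ≠ j.castSucc → i ≠ Fin.last (d + 1) → δ' i = δ i := by
      intro i h1 h2
      rw [hδ'def, Finsupp.add_apply, Finsupp.tsub_apply]
      simp [Finsupp.single_apply, Ne.symm h1, Ne.symm h2, h1, h2]
    set ρ : Fin (d + 2) →₀ ℕ :=
      2 • δ - Finsupp.single j.castSucc 1 + Finsupp.single (Fin.last (d + 1)) 1 with hρdef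
    have hρj : ρ j.castSucc = 2 * δ j.castSucc - 1 := by
      rw [hρdef, Finsupp.add_apply, Finsupp.tsub_apply, Finsupp.smul_apply, smul_eq_mul]
      simp [Finsupp.single_apply, hne, Ne.symm hne]
    have hρl : ρ (Fin.last (d + 1)) = 2 * δ (Fin.last (d + 1)) + 1 := by
      rw [hρdef, Finsupp.add_apply, Finsupp.tsub_apply, Finsupp.smul_apply, smul_eq_mul]
      simp [Finsupp.single_apply, hne, Ne.symm hne]
    have hρo : ∀ i, i ≠ j.castSucc → i ≠ Fin.last (d + 1) → ρ i = 2 * δ i := by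
      intro i h1 h2
      rw [hρdef, Finsupp.add_apply, Finsupp.tsub_apply, Finsupp.smul_apply, smul_eq_mul]
      simp [Finsupp.single_apply, Ne.symm h1, Ne.symm h2, h1, h2]
    have hδsplit := hδ
    rw [sum_finsupp_eq, split_two_add d j (fun i => δ i)] at hδsplit
    have hρsum : (ρ.sum fun _ x => x) = 2 * k := by
      rw [sum_finsupp_eq, split_two_add d j (fun i => ρ i)]
      have hr : ∑ i ∈ (Finset.univ.erase j.castSucc).erase (Fin.last (d + 1)), ρ i
          = ∑ i ∈ (Finset.univ.erase j.castSucc).erase (Fin.last (d + 1)), 2 * δ i := by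
        refine Finset.sum_congr rfl fun i hi => ?_
        simp only [Finset.mem_erase] at hi
        exact hρo i hi.2.1 hi.1
      rw [hr, hρj, hρl, ← Finset.mul_sum]
      omega
    have hrel' := hrel ρ hρsum j
    rw [if_pos (by omega : 0 < ρ j.castSucc), if_pos (by omega : 0 < ρ (Fin.last (d + 1)))]
      at hrel'
    have he1 : ρ + Finsupp.single (Fin.last (d + 1)) 1 - Finsupp.single j.castSucc 1
        = 2 • δ' := by
      ext i
      rw [Finsupp.tsub_apply, Finsupp.add_apply, Finsupp.single_apply, Finsupp.single_apply,
        Finsupp.smul_apply, smul_eq_mul]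
      rcases eq_or_ne i j.castSucc with rfl | h1
      · simp only [eq_self_iff_true, if_true, if_pos rfl, if_neg (Ne.symm hne), hρj, hδ'j, if_true, eq_self_iff_true]; omega
      · rcases eq_or_ne i (Fin.last (d + 1)) with rfl | h2
        · simp only [eq_self_iff_true, if_true, if_pos rfl, if_neg hne, hρl, hδ'l]; omega
        · simp only [if_neg (Ne.symm h1), if_neg (Ne.symm h2), hρo i h1 h2, hδ'o i h1 h2]
          omega
    have he2 : ρ - Finsupp.single (Fin.last (d + 1)) 1 + Finsupp.single j.castSucc 1
        = 2 • δ := by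
      ext i
      rw [Finsupp.add_apply, Finsupp.tsub_apply, Finsupp.single_apply, Finsupp.single_apply,
        Finsupp.smul_apply, smul_eq_mul]
      rcases eq_or_ne i j.castSucc with rfl | h1
      · simp only [eq_self_iff_true, if_true, if_pos rfl, if_neg (Ne.symm hne), hρj]; omega
      · rcases eq_or_ne i (Fin.last (d + 1)) with rfl | h2
        · simp only [eq_self_iff_true, if_true, if_pos rfl, if_neg hne, hρl]; omega
        · simp only [if_neg (Ne.symm h1), if_neg (Ne.symm h2), hρo i h1 h2]; omega
    rw [he1, he2, hρj, hρl] at hrel'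
    have hδ'sum : (δ'.sum fun _ x => x) = k := by
      rw [sum_finsupp_eq, split_two_add d j (fun i => δ' i)]
      have hr : ∑ i ∈ (Finset.univ.erase j.castSucc).erase (Fin.last (d + 1)), δ' i
          = ∑ i ∈ (Finset.univ.erase j.castSucc).erase (Fin.last (d + 1)), δ i := by
        refine Finset.sum_congr rfl fun i hi => ?_
        simp only [Finset.mem_erase] at hi
        exact hδ'o i hi.2.1 hi.1
      rw [hr, hδ'j, hδ'l]
      omega
    have hδ'M : (∑ i : Fin (d + 1), δ' i.castSucc) = M := by
      rw [← Finset.add_sum_erase _ _ (Finset.mem_univ j)]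
      rw [← Finset.add_sum_erase _ _ (Finset.mem_univ j)] at hM
      have hr : ∑ i ∈ Finset.univ.erase j, δ' i.castSucc
          = ∑ i ∈ Finset.univ.erase j, δ i.castSucc := by
        refine Finset.sum_congr rfl fun i hi => ?_
        simp only [Finset.mem_erase] at hi
        exact hδ'o i.castSucc (fun h => hi.1 (Fin.castSucc_injective _ h))
          (Fin.ne_of_lt (Fin.castSucc_lt_last i))
      rw [hr, hδ'j]
      omega
    have hIH := IH δ' hδ'sum hδ'M
    have hmulid : (Nat.multinomial Finset.univ fun i : Fin (d + 2) => δ' i)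
        * (δ (Fin.last (d + 1)) + 1)
        = (Nat.multinomial Finset.univ fun i : Fin (d + 2) => δ i) * δ j.castSucc := by
      have hs1 := Nat.multinomial_spec Finset.univ (fun i : Fin (d + 2) => δ i)
      have hs2 := Nat.multinomial_spec Finset.univ (fun i : Fin (d + 2) => δ' i)
      rw [← sum_finsupp_eq, hδ] at hs1
      rw [← sum_finsupp_eq, hδ'sum] at hs2
      have hp := prod_fact_move d δ δ' j hj hδ'j hδ'l hδ'o
      have hpos : 0 < (∏ i, Nat.factorial (δ' i)) * δ j.castSucc :=
        Nat.mul_pos (Finset.prod_pos fun i _ => Nat.factorial_pos _) hj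
      refine Nat.eq_of_mul_eq_mul_right hpos ?_
      calc (Nat.multinomial Finset.univ fun i : Fin (d + 2) => δ' i)
            * (δ (Fin.last (d + 1)) + 1) * ((∏ i, Nat.factorial (δ' i)) * δ j.castSucc)
          = ((∏ i, Nat.factorial (δ' i))
              * Nat.multinomial Finset.univ (fun i : Fin (d + 2) => δ' i))
            * ((δ (Fin.last (d + 1)) + 1) * δ j.castSucc) := by ring
        _ = Nat.factorial k * ((δ (Fin.last (d + 1)) + 1) * δ j.castSucc) := by rw [hs2]
        _ = ((∏ i, Nat.factorial (δ i))
              * Nat.multinomial Finset.univ (fun i : Fin (d + 2) => δ i))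
            * ((δ (Fin.last (d + 1)) + 1) * δ j.castSucc) := by rw [hs1]
        _ = (Nat.multinomial Finset.univ fun i : Fin (d + 2) => δ i) * δ j.castSucc
            * ((∏ i, Nat.factorial (δ i)) * (δ (Fin.last (d + 1)) + 1)) := by ring
        _ = _ := by rw [← hp]
    have hcast1 : ((2 * δ (Fin.last (d + 1)) + 1 : ℕ) : ℝ) + 1
        = 2 * ((δ (Fin.last (d + 1)) : ℝ) + 1) := by push_cast; ring
    have hcast2 : ((2 * δ j.castSucc - 1 : ℕ) : ℝ) + 1 = 2 * (δ j.castSucc : ℝ) := by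
      have h1 : (1 : ℕ) ≤ 2 * δ j.castSucc := by omega
      rw [Nat.cast_sub h1]; push_cast; ring
    rw [hcast1, hcast2, hIH, sub_eq_zero] at hrel'
    have hjR : (δ j.castSucc : ℝ) ≠ 0 := by positivity
    have hmulR : ((Nat.multinomial Finset.univ fun i : Fin (d + 2) => δ' i : ℕ) : ℝ)
        * ((δ (Fin.last (d + 1)) : ℝ) + 1)
        = ((Nat.multinomial Finset.univ fun i : Fin (d + 2) => δ i : ℕ) : ℝ)
          * (δ j.castSucc : ℝ) := by
      exact_mod_cast congrArg (Nat.cast : ℕ → ℝ) hmulid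
    refine mul_right_cancel₀ (b := 2 * (δ j.castSucc : ℝ))
      (mul_ne_zero two_ne_zero hjR) ?_
    calc c (2 • δ) * (2 * (δ j.castSucc : ℝ))
        = c (Finsupp.single (Fin.last (d + 1)) (2 * k))
          * ((Nat.multinomial Finset.univ fun i : Fin (d + 2) => δ' i : ℕ) : ℝ)
          * (2 * ((δ (Fin.last (d + 1)) : ℝ) + 1)) := hrel'.symm
      _ = c (Finsupp.single (Fin.last (d + 1)) (2 * k))
          * (((Nat.multinomial Finset.univ fun i : Fin (d + 2) => δ' i : ℕ) : ℝ)
            * ((δ (Fin.last (d + 1)) : ℝ) + 1)) * 2 := by ring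
      _ = c (Finsupp.single (Fin.last (d + 1)) (2 * k))
          * (((Nat.multinomial Finset.univ fun i : Fin (d + 2) => δ i : ℕ) : ℝ)
            * (δ j.castSucc : ℝ)) * 2 := by rw [hmulR]
      _ = c (Finsupp.single (Fin.last (d + 1)) (2 * k))
          * ((Nat.multinomial Finset.univ fun i : Fin (d + 2) => δ i : ℕ) : ℝ)
          * (2 * (δ j.castSucc : ℝ)) := by ring
end

section
/- Let n ≥ 2 and u ∈ ℝ^n with u_n ≠ 0. Define the change of variables z ↦ (τ, σ) ∈ ℝ × ℝ^{n−1} by τ = (u·z)/|u| and σ = (u^{(n)} τ − |u| z^{(n)})/u_n, where z^{(n)}, u^{(n)} omit the n-th coordinate. Then the inverse map is given by z^{(n)} = (u^{(n)} τ − u_n σ)/|u| and z_n = (u_n τ + u^{(n)}·σ)/|u|, and the absolute value of the Jacobian determinant of z ↦ (τ,σ) equals (|u_n|/|u|)^{n−2}. -/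
open Matrix

/-- The forward change of variables `z ↦ (τ, σ)` along the direction of the `n`-th
coordinate (here `n = d + 2`, encoded as a self-map of `ℝ^n` with `τ` placed in the last
coordinate and `σ` in the first `n - 1` coordinates):
`τ = (u·z)/|u|`, `σ = (u⁽ⁿ⁾ τ - |u| z⁽ⁿ⁾)/u_n`. -/
noncomputable def fwdChange (d : ℕ) (u : Fin (d + 2) → ℝ) :
    (Fin (d + 2) → ℝ) → (Fin (d + 2) → ℝ) := fun z j =>
  if j = Fin.last (d + 1) then
    (∑ i, u i * z i) / Real.sqrt (∑ i, u i ^ 2)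
  else
    (u j * ((∑ i, u i * z i) / Real.sqrt (∑ i, u i ^ 2)) -
        Real.sqrt (∑ i, u i ^ 2) * z j) / u (Fin.last (d + 1))

/-- The inverse change of variables `(τ, σ) ↦ z`:
`z⁽ⁿ⁾ = (u⁽ⁿ⁾ τ - u_n σ)/|u|`, `z_n = (u_n τ + u⁽ⁿ⁾·σ)/|u|`. -/
noncomputable def invChange (d : ℕ) (u : Fin (d + 2) → ℝ) :
    (Fin (d + 2) → ℝ) → (Fin (d + 2) → ℝ) := fun v j =>
  if j = Fin.last (d + 1) then
    (u (Fin.last (d + 1)) * v (Fin.last (d + 1)) +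
        ∑ i : Fin (d + 1), u i.castSucc * v i.castSucc) / Real.sqrt (∑ i, u i ^ 2)
  else
    (u j * v (Fin.last (d + 1)) - u (Fin.last (d + 1)) * v j) / Real.sqrt (∑ i, u i ^ 2)

/-- The matrix of the linear map `(τ, σ) ↦ z`. -/
noncomputable def invChangeMatrix (d : ℕ) (u : Fin (d + 2) → ℝ) :
    Matrix (Fin (d + 2)) (Fin (d + 2)) ℝ := fun j i =>
  if i = Fin.last (d + 1) then u j / Real.sqrt (∑ i, u i ^ 2)
  else if j = Fin.last (d + 1) then u i / Real.sqrt (∑ i, u i ^ 2)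
  else if j = i then -(u (Fin.last (d + 1))) / Real.sqrt (∑ i, u i ^ 2)
  else 0

/-!
The map `(τ, σ) ↦ z` is linear. Moving its last coordinate into a `1 × 1` block, its matrix has
top-left block `-(u_n/|u|) • 1`, so the Schur complement gives the determinant
`(-u_n/|u|)^{n-1} · |u|/u_n`. Composing the forward map after the inverse one is checked
directly, using `u · z = |u| τ`; as the matrix is invertible, the other composition follows.
-/

theorem Matrix.det_fromBlocks_smul_one₁₁ {m n K : Type*} [Fintype m] [DecidableEq m]
    [Fintype n] [DecidableEq n] [Field K] {c : K} (hc : c ≠ 0)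
    (B : Matrix m n K) (C : Matrix n m K) (D : Matrix n n K) :
    (fromBlocks (c • 1) B C D).det = c ^ Fintype.card m * (D - c⁻¹ • (C * B)).det := by
  have hinv : (c • 1 : Matrix m m K) * (c⁻¹ • 1) = 1 := by simp [smul_smul, hc]
  let _ : Invertible (c • 1 : Matrix m m K) := ⟨c⁻¹ • 1, by simp [smul_smul, hc], hinv⟩
  rw [det_fromBlocks₁₁, invOf_eq_right_inv hinv, det_smul, det_one, mul_one,
    Matrix.mul_smul, Matrix.mul_one, Matrix.smul_mul]

lemma sqrt_sum_sq_pos {ι : Type*} [Fintype ι] {u : ι → ℝ} {j : ι} (hj : u j ≠ 0) :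
    0 < √(∑ i, u i ^ 2) :=
  Real.sqrt_pos.2 <| lt_of_lt_of_le (by positivity)
    (Finset.single_le_sum (fun i _ => sq_nonneg (u i)) (Finset.mem_univ j))

lemma sum_castSucc_sq_eq {d : ℕ} (u : Fin (d + 2) → ℝ) :
    ∑ i : Fin (d + 1), u i.castSucc ^ 2 = √(∑ i, u i ^ 2) ^ 2 - u (Fin.last (d + 1)) ^ 2 := by
  rw [Real.sq_sqrt (by positivity), Fin.sum_univ_castSucc (f := fun i => u i ^ 2)]
  ring

section ChangeOfVariables

variable {d : ℕ} {u : Fin (d + 2) → ℝ}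

lemma invChange_eq_mulVec (v : Fin (d + 2) → ℝ) :
    invChange d u v = invChangeMatrix d u *ᵥ v := by
  funext j
  induction j using Fin.lastCases with
  | last =>
    simp only [invChange, ↓reduceIte, Fin.sum_univ_castSucc, add_div, Finset.sum_div, mulVec,
      dotProduct, invChangeMatrix, ite_mul, div_mul_eq_mul_div, Fin.castSucc_ne_last]
    ring
  | cast j =>
    simp only [invChange, Fin.castSucc_ne_last, ↓reduceIte, Fin.sum_univ_castSucc, mulVec,
      dotProduct, invChangeMatrix, ite_mul, zero_mul, Fin.castSucc_inj, Finset.sum_ite_eq,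
      Finset.mem_univ]
    ring

lemma sum_mul_invChange (v : Fin (d + 2) → ℝ) :
    ∑ i, u i * invChange d u v i = √(∑ i, u i ^ 2) * v (Fin.last (d + 1)) := by
  have expand : ∑ i, u i * invChange d u v i =
      ((∑ i : Fin (d + 1), u i.castSucc ^ 2) + u (Fin.last (d + 1)) ^ 2) *
        v (Fin.last (d + 1)) / √(∑ i, u i ^ 2) := by
    rw [Fin.sum_univ_castSucc]
    simp only [invChange, if_neg (Fin.castSucc_ne_last _), ↓reduceIte, mul_div_assoc',
      ← Finset.sum_div, ← add_div]
    congr 1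
    have summand (i : Fin (d + 1)) : u i.castSucc * (u i.castSucc * v (Fin.last (d + 1)) -
        u (Fin.last (d + 1)) * v i.castSucc) = u i.castSucc ^ 2 * v (Fin.last (d + 1)) -
          u (Fin.last (d + 1)) * (u i.castSucc * v i.castSucc) := by ring
    simp only [summand, Finset.sum_sub_distrib, ← Finset.sum_mul, ← Finset.mul_sum]
    ring
  rw [expand, sum_castSucc_sq_eq, sub_add_cancel, sq, mul_div_right_comm, mul_self_div_self]

lemma fwdChange_invChange (hu : u (Fin.last (d + 1)) ≠ 0) (v : Fin (d + 2) → ℝ) :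
    fwdChange d u (invChange d u v) = v := by
  have hS := (sqrt_sum_sq_pos hu).ne'
  funext j
  induction j using Fin.lastCases with
  | last => simp [fwdChange, sum_mul_invChange, hS]
  | cast j =>
    simp only [fwdChange, if_neg (Fin.castSucc_ne_last _)]
    rw [sum_mul_invChange]
    simp only [invChange, if_neg (Fin.castSucc_ne_last _)]
    field_simp
    ring

lemma invChangeMatrix_submatrix_finSumFinEquiv :
    (invChangeMatrix d u).submatrix (finSumFinEquiv (m := d + 1) (n := 1))
        (finSumFinEquiv (m := d + 1) (n := 1)) =
      fromBlocks ((-u (Fin.last (d + 1)) / √(∑ i, u i ^ 2)) • 1)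
        (replicateCol (Fin 1) fun i : Fin (d + 1) => u i.castSucc / √(∑ i, u i ^ 2))
        (replicateRow (Fin 1) fun i : Fin (d + 1) => u i.castSucc / √(∑ i, u i ^ 2))
        (of fun _ _ => u (Fin.last (d + 1)) / √(∑ i, u i ^ 2)) := by
  have castAdd_eq (i : Fin (d + 1)) : Fin.castAdd 1 i = i.castSucc := rfl
  have natAdd_eq (i : Fin 1) : Fin.natAdd (d + 1) i = Fin.last (d + 1) := by
    rw [Fin.fin_one_eq_zero i]; rfl
  ext (j | j) (i | i) <;>
    simp [invChangeMatrix, castAdd_eq, natAdd_eq, Fin.castSucc_ne_last, Matrix.one_apply]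

lemma det_invChangeMatrix (hu : u (Fin.last (d + 1)) ≠ 0) :
    (invChangeMatrix d u).det =
      (-u (Fin.last (d + 1)) / √(∑ i, u i ^ 2)) ^ (d + 1) *
        (√(∑ i, u i ^ 2) / u (Fin.last (d + 1))) := by
  have hS := (sqrt_sum_sq_pos hu).ne'
  have hdot : ∑ i : Fin (d + 1),
      u i.castSucc / √(∑ i, u i ^ 2) * (u i.castSucc / √(∑ i, u i ^ 2)) =
        (√(∑ i, u i ^ 2) ^ 2 - u (Fin.last (d + 1)) ^ 2) / √(∑ i, u i ^ 2) ^ 2 := by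
    simp_rw [div_mul_div_comm, ← sq]
    rw [← Finset.sum_div, sum_castSucc_sq_eq]
  rw [← det_submatrix_equiv_self (finSumFinEquiv (m := d + 1) (n := 1)),
    invChangeMatrix_submatrix_finSumFinEquiv, det_fromBlocks_smul_one₁₁ (by simp [hu, hS]),
    Fintype.card_fin, det_unique, replicateRow_mul_replicateCol]
  simp only [Matrix.sub_apply, Matrix.smul_apply, of_apply, dotProduct, smul_eq_mul, hdot]
  field_simp
  ring

lemma abs_det_invChangeMatrix (hu : u (Fin.last (d + 1)) ≠ 0) :
    |(invChangeMatrix d u).det| = (|u (Fin.last (d + 1))| / √(∑ i, u i ^ 2)) ^ d := by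
  have hS := sqrt_sum_sq_pos hu
  rw [det_invChangeMatrix hu, abs_mul, abs_pow, abs_div, abs_div, abs_neg, abs_of_pos hS,
    pow_succ, mul_assoc, div_mul_div_cancel₀ hS.ne', div_self (abs_ne_zero.2 hu), mul_one]

lemma invChange_surjective (hu : u (Fin.last (d + 1)) ≠ 0) :
    Function.Surjective (invChange d u) := by
  have hS := (sqrt_sum_sq_pos hu).ne'
  rw [show invChange d u = (invChangeMatrix d u *ᵥ ·) from funext invChange_eq_mulVec,
    mulVec_surjective_iff_isUnit, isUnit_iff_isUnit_det, det_invChangeMatrix hu,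
    isUnit_iff_ne_zero]
  simp [hu, hS]

lemma invChange_fwdChange (hu : u (Fin.last (d + 1)) ≠ 0) (z : Fin (d + 2) → ℝ) :
    invChange d u (fwdChange d u z) = z :=
  Function.LeftInverse.rightInverse_of_surjective (fwdChange_invChange hu)
    (invChange_surjective hu) z

end ChangeOfVariables

/-- The maps `z ↦ (τ,σ)` and `(τ,σ) ↦ z` given by the displayed formulas are mutually
inverse, the inverse map is linear with matrix `invChangeMatrix`, and the absolute value
of the Jacobian determinant of the change of variables (i.e. of `(τ,σ) ↦ z`) equals
`(|u_n|/|u|)^{n-2}`. -/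
theorem change_of_variables_jacobian (d : ℕ) (u : Fin (d + 2) → ℝ)
    (hu : u (Fin.last (d + 1)) ≠ 0) :
    (∀ z, invChange d u (fwdChange d u z) = z) ∧
    (∀ v, fwdChange d u (invChange d u v) = v) ∧
    (∀ v, invChange d u v = (invChangeMatrix d u).mulVec v) ∧
    |(invChangeMatrix d u).det| =
      (|u (Fin.last (d + 1))| / Real.sqrt (∑ i, u i ^ 2)) ^ d :=
  ⟨invChange_fwdChange hu, fwdChange_invChange hu, invChange_eq_mulVec,
    abs_det_invChangeMatrix hu⟩
end
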